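/- For m ∈ N, the functional K ↦ Vol_n(K)^{nm-m} · Vol_{nm}(Π^{∘,m} K) on convex bodies in R^n is invariant under all invertible affine transformations of R^n. -/

import Mathlib

open MeasureTheory Set Pointwise Metric
open scoped RealInnerProductSpace ENNReal NNReal

noncomputable section

/-- `R^n` as Euclidean space. -/
abbrev En (n : ℕ) : Type := EuclideanSpace ℝ (Fin n)

/-- `(R^n)^m = R^{nm}` with its Euclidean structure. -/
abbrev Enm (n m : ℕ) : Type := PiLp 2 (fun _ : Fin m => En n)

instance (n m : ℕ) : MeasurableSpace (Enm n m) := MeasurableSpace.comap WithLp.ofLp MeasurableSpace.pi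
instance (n m : ℕ) : BorelSpace (Enm n m) := PiLp.borelSpace 2

/-- The negative part `t_- = max{0, -t}`. -/
def negpt (t : ℝ) : ℝ := max 0 (-t)

/-- The `m`-th higher-order difference body
`D^m(K) = {(x_1,…,x_m) : K ∩ ⋂ᵢ (xᵢ + K) ≠ ∅}`. -/
def higherDiff {n m : ℕ} (K : Set (En n)) : Set (Enm n m) :=
  {x | (K ∩ ⋂ i, (x i +ᵥ K)).Nonempty}

/-- The `m`-covariogram `g_{K,m}(x̄) = Vol_n(K ∩ ⋂ᵢ (xᵢ + K))`. -/
def covariogram {n m : ℕ} (K : Set (En n)) (x : Enm n m) : ℝ :=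
  (volume (K ∩ ⋂ i, (x i +ᵥ K))).toReal

/-- `C_θ̄ = conv([0,θ_1] ∪ ⋯ ∪ [0,θ_m])`. -/
def Cbody {n m : ℕ} (θ : Enm n m) : Set (En n) :=
  convexHull ℝ (insert 0 (Set.range fun i => θ i))

/-- Support function `h_K(u) = sup_{y ∈ K} ⟨u, y⟩`. -/
def suppFn {n : ℕ} (K : Set (En n)) (u : En n) : ℝ :=
  sSup ((fun y => ⟪u, y⟫) '' K)

/-- `n·V(K[n-1], L)`, the first variation of volume:
`nV(K[n-1],L) = d/dε Vol_n(K + εL)|_{ε=0⁺}`. -/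
def nMixed {n : ℕ} (K L : Set (En n)) : ℝ :=
  derivWithin (fun ε : ℝ => (volume (K + ε • L)).toReal) (Set.Ici 0) 0

/-- Support function of the higher-order projection body:
`h_{Π^m K}(θ̄) = n V(K[n-1], C_{-θ̄})`. -/
def projSupport {n : ℕ} (m : ℕ) (K : Set (En n)) (θ : Enm n m) : ℝ :=
  nMixed K (Cbody (-θ))

/-- The `m`-th higher-order projection body `Π^m K`. -/
def projBody {n : ℕ} (m : ℕ) (K : Set (En n)) : Set (Enm n m) :=
  {x | ∀ θ : Enm n m, ⟪x, θ⟫ ≤ projSupport m K θ}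

/-- The polar of the higher-order projection body, `Π^{∘,m} K = {h_{Π^m K} ≤ 1}`. -/
def polarProjBody {n : ℕ} (m : ℕ) (K : Set (En n)) : Set (Enm n m) :=
  {x | projSupport m K x ≤ 1}

/-- Support function of the higher-order centroid body. -/
def centroidSupport {n m : ℕ} (L : Set (Enm n m)) (θ : En n) : ℝ :=
  (volume L).toReal⁻¹ * ∫ x in L, (⨆ i, negpt ⟪(x : Enm n m) i, θ⟫)

/-- The `m`-th higher-order centroid body `Γ^m L`. -/
def centroidBody {n m : ℕ} (L : Set (Enm n m)) : Set (En n) :=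
  {y | ∀ θ : En n, ⟪y, θ⟫ ≤ centroidSupport L θ}

/-- Radial function of a star-shaped set. -/
def radialFn {V : Type*} [SMul ℝ V] (A : Set V) (y : V) : ℝ :=
  sSup {r : ℝ | 0 < r ∧ r • y ∈ A}

/-- `K` is an `n`-dimensional simplex. -/
def IsSimplexBody {n : ℕ} (K : Set (En n)) : Prop :=
  ∃ v : Fin (n + 1) → En n, AffineIndependent ℝ v ∧ K = convexHull ℝ (Set.range v)

/-! Translations change neither `Vol_n(K)` nor the mixed volumes defining `h_{Π^m K}`. For a
linear `A`, the change of variables `A(K + ε A⁻¹L) = AK + εL` gives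
`h_{Π^m AK}(θ̄) = |det A| h_{Π^m K}(A⁻¹θ_1, …, A⁻¹θ_m)`, so `Π^{∘,m}(AK)` is the preimage of
`Π^{∘,m} K` under `|det A| · (A⁻¹ ⊕ ⋯ ⊕ A⁻¹)` and its volume is multiplied by
`|det A|^{m - nm}`, which cancels the factor `|det A|^{nm - m}` coming from `Vol_n(AK)^{nm-m}`. -/

theorem derivWithin_Ici_zero_comp_mul_left {E : Type*} [NormedAddCommGroup E] [NormedSpace ℝ E]
    (f : ℝ → E) {c : ℝ} (hc : 0 < c) :
    derivWithin (fun x => f (c * x)) (Ici 0) 0 = c • derivWithin f (Ici 0) 0 := by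
  rw [derivWithin_comp_mul_left, LinearOrderedField.smul_Ici hc, mul_zero]

theorem LinearMap.det_withLpMap {K V : Type*} [CommRing K] [AddCommGroup V] [Module K V]
    (p : ℝ≥0∞) (f : V →ₗ[K] V) : (f.withLpMap p).det = f.det :=
  LinearMap.det_conj f (WithLp.linearEquiv p K V).symm

theorem finrank_Enm (n m : ℕ) : Module.finrank ℝ (Enm n m) = m * n := by
  rw [(WithLp.linearEquiv 2 ℝ (Fin m → En n)).finrank_eq, Module.finrank_pi_fintype]
  simp

def diagMap {n : ℕ} (m : ℕ) (f : En n →ₗ[ℝ] En n) : Enm n m →ₗ[ℝ] Enm n m :=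
  (LinearMap.piMap fun _ : Fin m => f).withLpMap 2

theorem det_diagMap {n : ℕ} (m : ℕ) (f : En n →ₗ[ℝ] En n) :
    (diagMap m f).det = f.det ^ m := by
  rw [diagMap, LinearMap.det_withLpMap, LinearMap.piMap, LinearMap.det_pi, Finset.prod_const,
    Finset.card_univ, Fintype.card_fin]

theorem nMixed_vadd {n : ℕ} (v : En n) (K L : Set (En n)) :
    nMixed (v +ᵥ K) L = nMixed K L := by
  simp only [nMixed, vadd_add_assoc, measure_vadd]

theorem nMixed_image_linearEquiv {n : ℕ} (A : En n ≃ₗ[ℝ] En n) (K L : Set (En n)) :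
    nMixed (A '' K) L = |(A : En n →ₗ[ℝ] En n).det| * nMixed K (A.symm '' L) := by
  have hvol (ε : ℝ) : (volume (A '' K + ε • L)).toReal
      = |(A : En n →ₗ[ℝ] En n).det| * (volume (K + ε • (A.symm '' L))).toReal := by
    have himage : A '' (K + ε • (A.symm '' L)) = A '' K + ε • L := by
      rw [image_add, image_smul_comm _ _ _ (map_smul A ε), image_image]
      simp
    rw [← himage, ← LinearEquiv.coe_coe, Measure.addHaar_image_linearMap, ENNReal.toReal_mul,
      ENNReal.toReal_ofReal (abs_nonneg _)]
  simp only [nMixed, hvol, derivWithin_const_mul_field]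

theorem nMixed_smul_right {n : ℕ} (K L : Set (En n)) {c : ℝ} (hc : 0 < c) :
    nMixed K (c • L) = c * nMixed K L := by
  simp only [nMixed, smul_smul]
  simp_rw [mul_comm _ c]
  exact derivWithin_Ici_zero_comp_mul_left (fun t : ℝ => (volume (K + t • L)).toReal) hc

theorem image_Cbody {n m : ℕ} (f : En n →ₗ[ℝ] En n) (θ : Enm n m) :
    f '' Cbody θ = Cbody (diagMap m f θ) := by
  rw [Cbody, Cbody, f.image_convexHull, image_insert_eq, map_zero, ← range_comp]
  rfl

theorem Cbody_smul {n m : ℕ} (c : ℝ) (θ : Enm n m) : Cbody (c • θ) = c • Cbody θ := by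
  rw [Cbody, Cbody, ← convexHull_smul, smul_set_insert, smul_zero, smul_set_range]
  rfl

theorem projSupport_vadd {n : ℕ} (m : ℕ) (v : En n) (K : Set (En n)) :
    projSupport m (v +ᵥ K) = projSupport m K := by
  ext θ
  exact nMixed_vadd v K _

theorem projSupport_image_linearEquiv {n : ℕ} (m : ℕ) (A : En n ≃ₗ[ℝ] En n) (K : Set (En n))
    (θ : Enm n m) :
    projSupport m (A '' K) θ
      = |(A : En n →ₗ[ℝ] En n).det| * projSupport m K (diagMap m A.symm θ) := by
  rw [projSupport, nMixed_image_linearEquiv, ← LinearEquiv.coe_coe, image_Cbody, map_neg]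
  rfl

theorem projSupport_smul {n : ℕ} (m : ℕ) (K : Set (En n)) {c : ℝ} (hc : 0 < c) (θ : Enm n m) :
    projSupport m K (c • θ) = c * projSupport m K θ := by
  rw [projSupport, projSupport, ← smul_neg, Cbody_smul, nMixed_smul_right _ _ hc]

theorem polarProjBody_vadd {n : ℕ} (m : ℕ) (v : En n) (K : Set (En n)) :
    polarProjBody m (v +ᵥ K) = polarProjBody m K := by
  simp only [polarProjBody, projSupport_vadd]

theorem polarProjBody_image_linearEquiv {n : ℕ} (m : ℕ) (A : En n ≃ₗ[ℝ] En n) (K : Set (En n)) :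
    polarProjBody m (A '' K)
      = (|(A : En n →ₗ[ℝ] En n).det| • diagMap m A.symm) ⁻¹' polarProjBody m K := by
  have hdet_pos : 0 < |(A : En n →ₗ[ℝ] En n).det| :=
    abs_pos.2 (LinearEquiv.isUnit_det' A).ne_zero
  ext θ
  simp [polarProjBody, projSupport_image_linearEquiv, projSupport_smul _ _ hdet_pos]

theorem volume_polarProjBody_image_linearEquiv {n : ℕ} (m : ℕ) (A : En n ≃ₗ[ℝ] En n)
    (K : Set (En n)) :
    volume (polarProjBody m (A '' K))
      = ENNReal.ofReal (|(A : En n →ₗ[ℝ] En n).det| ^ m / |(A : En n →ₗ[ℝ] En n).det| ^ (m * n))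
        * volume (polarProjBody m K) := by
  have hdet : (A : En n →ₗ[ℝ] En n).det ≠ 0 := (LinearEquiv.isUnit_det' A).ne_zero
  have hdet' : (|(A : En n →ₗ[ℝ] En n).det| • diagMap m (A.symm : En n →ₗ[ℝ] En n)).det ≠ 0 := by
    rw [LinearMap.det_smul, det_diagMap, LinearEquiv.det_coe_symm]
    positivity
  rw [polarProjBody_image_linearEquiv, Measure.addHaar_preimage_linearMap _ hdet',
    LinearMap.det_smul, det_diagMap, LinearEquiv.det_coe_symm, finrank_Enm]
  congr 2
  rw [abs_inv, abs_mul, abs_pow, abs_pow, abs_abs, abs_inv, inv_pow, div_eq_mul_inv, mul_inv,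
    inv_inv, mul_comm]

theorem AffineEquiv.image_eq_vadd_image_linear {k V : Type*} [Ring k] [AddCommGroup V]
    [Module k V] (φ : V ≃ᵃ[k] V) (s : Set V) : φ '' s = φ 0 +ᵥ φ.linear '' s := by
  rw [← image_vadd, image_image]
  refine image_congr fun x _ => ?_
  simpa [add_comm] using φ.map_vadd 0 x

theorem petty_product_affine_invariant_general (n m : ℕ) (hn : 0 < n)
    (K : Set (En n)) (φ : En n ≃ᵃ[ℝ] En n) :
    (volume (⇑φ '' K)).toReal ^ (n * m - m)
        * (volume (polarProjBody m (⇑φ '' K))).toReal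
      = (volume K).toReal ^ (n * m - m) * (volume (polarProjBody m K)).toReal := by
  set c := |(φ.linear : En n →ₗ[ℝ] En n).det|
  have hc : 0 < c := abs_pos.2 (LinearEquiv.isUnit_det' φ.linear).ne_zero
  have hvolK : volume (φ '' K) = ENNReal.ofReal c * volume K := by
    rw [φ.image_eq_vadd_image_linear, measure_vadd, ← LinearEquiv.coe_coe,
      Measure.addHaar_image_linearMap]
  have hvolP : volume (polarProjBody m (φ '' K))
      = ENNReal.ofReal (c ^ m / c ^ (m * n)) * volume (polarProjBody m K) := by
    rw [φ.image_eq_vadd_image_linear, polarProjBody_vadd, volume_polarProjBody_image_linearEquiv]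
  have hpow : c ^ (m * n) = c ^ (n * m - m) * c ^ m := by
    rw [← pow_add, Nat.sub_add_cancel (Nat.le_mul_of_pos_left m hn), mul_comm]
  rw [hvolK, hvolP, ENNReal.toReal_mul, ENNReal.toReal_mul, ENNReal.toReal_ofReal hc.le,
    ENNReal.toReal_ofReal (by positivity), hpow, mul_pow]
  field_simp

/-- the Petty product `K ↦ Vol_n(K)^{nm-m}·Vol_{nm}(Π^{∘,m}K)`
is invariant under invertible affine transformations. -/
theorem petty_product_affine_invariant (n m : ℕ) (hn : 0 < n) (hm : 0 < m)
    (K : Set (En n)) (hK₁ : IsCompact K) (hK₂ : Convex ℝ K)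
    (hK₃ : (interior K).Nonempty) (φ : En n ≃ᵃ[ℝ] En n) :
    (volume (⇑φ '' K)).toReal ^ (n * m - m)
        * (volume (polarProjBody m (⇑φ '' K))).toReal
      = (volume K).toReal ^ (n * m - m) * (volume (polarProjBody m K)).toReal :=
  petty_product_affine_invariant_general n m hn K φ
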